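/- Fix real numbers A, B > 0 and let g_{A,B} be the inner product on 𝔥₉ represented in the basis ê₁,…,ê₆ by the diagonal matrix diag(1, 1, A², 1, B², 1). Then there exists a linear endomorphism J of 𝔥₉ with J² = -id, vanishing Nijenhuis tensor, and g_{A,B}(Jx, Jy) = g_{A,B}(x, y) for all x, y, if and only if B = A. -/
import Mathlib


open Matrix

/-- The Lie bracket of the nilpotent Lie algebra 𝔥₉ in the basis ê₁,…,ê₆: the only
nonzero brackets among basis vectors are [ê₁,ê₂] = ê₅ and [ê₁,ê₅] = [ê₂,ê₃] = -ê₆. -/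
def h9bracket (x y : Fin 6 → ℝ) : Fin 6 → ℝ :=
  ![0, 0, 0, 0, x 0 * y 1 - x 1 * y 0,
    -((x 0 * y 4 - x 4 * y 0) + (x 1 * y 2 - x 2 * y 1))]

/-- The Nijenhuis tensor N_J(X,Y) = [JX,JY] - J[JX,Y] - J[X,JY] - [X,Y] on 𝔥₉. -/
def nijenhuisH9 (J : Matrix (Fin 6) (Fin 6) ℝ) (x y : Fin 6 → ℝ) : Fin 6 → ℝ :=
  h9bracket (J.mulVec x) (J.mulVec y) - J.mulVec (h9bracket (J.mulVec x) y)
    - J.mulVec (h9bracket x (J.mulVec y)) - h9bracket x y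

/-- Basis vectors of ℝ⁶, used to extract scalar equations from tensorial hypotheses. -/
def h9bv (i : Fin 6) : Fin 6 → ℝ := fun j => if j = i then 1 else 0

lemma h9cons_val_five {α : Type*} {m : ℕ} (x : α) (u : Fin (m+5) → α) :
    Matrix.vecCons x u 5 =
      Matrix.vecHead (Matrix.vecTail (Matrix.vecTail (Matrix.vecTail (Matrix.vecTail u)))) := rfl

lemma h9fs23 : (Fin.succ 2 : Fin 6) = 3 := rfl
lemma h9fs34 : ((Fin.succ 2).succ : Fin 6) = 4 := rfl

/-- The standard integrable complex structure on 𝔥₉ compatible with g_{A,A}. -/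
noncomputable def h9J0 : Matrix (Fin 6) (Fin 6) ℝ :=
  !![0,-1,0,0,0,0; 1,0,0,0,0,0; 0,0,0,0,1,0; 0,0,0,0,0,-1; 0,0,-1,0,0,0; 0,0,0,1,0,0]

set_option maxHeartbeats 2000000 in
/-- Proposition 9.9: the left-invariant metric g_{A,B} = diag(1,1,A²,1,B²,1) on 𝔥₉
(with A, B > 0) is Hermitian with respect to some integrable complex structure J —
i.e. there is J with J² = -id, vanishing Nijenhuis tensor, and
g_{A,B}(Jx,Jy) = g_{A,B}(x,y) for all x, y — if and only if B = A. -/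
theorem h9_diagonal_metric_hermitian_iff (A B : ℝ) (hA : 0 < A) (hB : 0 < B) :
    (∃ J : Matrix (Fin 6) (Fin 6) ℝ,
      J * J = -1 ∧
      (∀ x y : Fin 6 → ℝ, nijenhuisH9 J x y = 0) ∧
      (∀ x y : Fin 6 → ℝ,
        J.mulVec x ⬝ᵥ (Matrix.diagonal ![1, 1, A ^ 2, 1, B ^ 2, 1]).mulVec (J.mulVec y) =
          x ⬝ᵥ (Matrix.diagonal ![1, 1, A ^ 2, 1, B ^ 2, 1]).mulVec y)) ↔
    B = A := by
  constructor
  · rintro ⟨J, hJ2, hN, hG⟩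
    have hn251 := congrFun (hN (h9bv 2) (h9bv 5)) 1
    simp [nijenhuisH9, h9bracket, h9bv, Matrix.mulVec, dotProduct, Fin.sum_univ_six, Matrix.vecHead, Matrix.vecTail, h9cons_val_five, h9fs23, h9fs34] at hn251
    have hn450 := congrFun (hN (h9bv 4) (h9bv 5)) 0
    simp [nijenhuisH9, h9bracket, h9bv, Matrix.mulVec, dotProduct, Fin.sum_univ_six, Matrix.vecHead, Matrix.vecTail, h9cons_val_five, h9fs23, h9fs34] at hn450
    have hn152 := congrFun (hN (h9bv 1) (h9bv 5)) 2
    simp [nijenhuisH9, h9bracket, h9bv, Matrix.mulVec, dotProduct, Fin.sum_univ_six, Matrix.vecHead, Matrix.vecTail, h9cons_val_five, h9fs23, h9fs34] at hn152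
    have hn054 := congrFun (hN (h9bv 0) (h9bv 5)) 4
    simp [nijenhuisH9, h9bracket, h9bv, Matrix.mulVec, dotProduct, Fin.sum_univ_six, Matrix.vecHead, Matrix.vecTail, h9cons_val_five, h9fs23, h9fs34] at hn054
    have hn140 := congrFun (hN (h9bv 1) (h9bv 4)) 0
    simp [nijenhuisH9, h9bracket, h9bv, Matrix.mulVec, dotProduct, Fin.sum_univ_six, Matrix.vecHead, Matrix.vecTail, h9cons_val_five, h9fs23, h9fs34] at hn140
    have hn041 := congrFun (hN (h9bv 0) (h9bv 4)) 1
    simp [nijenhuisH9, h9bracket, h9bv, Matrix.mulVec, dotProduct, Fin.sum_univ_six, Matrix.vecHead, Matrix.vecTail, h9cons_val_five, h9fs23, h9fs34] at hn041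
    have hn122 := congrFun (hN (h9bv 1) (h9bv 2)) 2
    simp [nijenhuisH9, h9bracket, h9bv, Matrix.mulVec, dotProduct, Fin.sum_univ_six, Matrix.vecHead, Matrix.vecTail, h9cons_val_five, h9fs23, h9fs34] at hn122
    have hn022 := congrFun (hN (h9bv 0) (h9bv 2)) 2
    simp [nijenhuisH9, h9bracket, h9bv, Matrix.mulVec, dotProduct, Fin.sum_univ_six, Matrix.vecHead, Matrix.vecTail, h9cons_val_five, h9fs23, h9fs34] at hn022
    have hn023 := congrFun (hN (h9bv 0) (h9bv 2)) 3
    simp [nijenhuisH9, h9bracket, h9bv, Matrix.mulVec, dotProduct, Fin.sum_univ_six, Matrix.vecHead, Matrix.vecTail, h9cons_val_five, h9fs23, h9fs34] at hn023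
    have hn123 := congrFun (hN (h9bv 1) (h9bv 2)) 3
    simp [nijenhuisH9, h9bracket, h9bv, Matrix.mulVec, dotProduct, Fin.sum_univ_six, Matrix.vecHead, Matrix.vecTail, h9cons_val_five, h9fs23, h9fs34] at hn123
    have hj55 := congrFun (congrFun hJ2 5) 5
    simp [Matrix.mul_apply, Fin.sum_univ_six, Matrix.neg_apply, Matrix.one_apply, h9fs23, h9fs34] at hj55
    have hj05 := congrFun (congrFun hJ2 0) 5
    simp [Matrix.mul_apply, Fin.sum_univ_six, Matrix.neg_apply, Matrix.one_apply, h9fs23, h9fs34] at hj05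
    have hj15 := congrFun (congrFun hJ2 1) 5
    simp [Matrix.mul_apply, Fin.sum_univ_six, Matrix.neg_apply, Matrix.one_apply, h9fs23, h9fs34] at hj15
    have hj25 := congrFun (congrFun hJ2 2) 5
    simp [Matrix.mul_apply, Fin.sum_univ_six, Matrix.neg_apply, Matrix.one_apply, h9fs23, h9fs34] at hj25
    have hj45 := congrFun (congrFun hJ2 4) 5
    simp [Matrix.mul_apply, Fin.sum_univ_six, Matrix.neg_apply, Matrix.one_apply, h9fs23, h9fs34] at hj45
    have hj33 := congrFun (congrFun hJ2 3) 3
    simp [Matrix.mul_apply, Fin.sum_univ_six, Matrix.neg_apply, Matrix.one_apply, h9fs23, h9fs34] at hj33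
    have hj53 := congrFun (congrFun hJ2 5) 3
    simp [Matrix.mul_apply, Fin.sum_univ_six, Matrix.neg_apply, Matrix.one_apply, h9fs23, h9fs34] at hj53
    have hj35 := congrFun (congrFun hJ2 3) 5
    simp [Matrix.mul_apply, Fin.sum_univ_six, Matrix.neg_apply, Matrix.one_apply, h9fs23, h9fs34] at hj35
    have hj44 := congrFun (congrFun hJ2 4) 4
    simp [Matrix.mul_apply, Fin.sum_univ_six, Matrix.neg_apply, Matrix.one_apply, h9fs23, h9fs34] at hj44
    have hj24 := congrFun (congrFun hJ2 2) 4
    simp [Matrix.mul_apply, Fin.sum_univ_six, Matrix.neg_apply, Matrix.one_apply, h9fs23, h9fs34] at hj24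
    have hj22 := congrFun (congrFun hJ2 2) 2
    simp [Matrix.mul_apply, Fin.sum_univ_six, Matrix.neg_apply, Matrix.one_apply, h9fs23, h9fs34] at hj22
    have hj00 := congrFun (congrFun hJ2 0) 0
    simp [Matrix.mul_apply, Fin.sum_univ_six, Matrix.neg_apply, Matrix.one_apply, h9fs23, h9fs34] at hj00
    have hj11 := congrFun (congrFun hJ2 1) 1
    simp [Matrix.mul_apply, Fin.sum_univ_six, Matrix.neg_apply, Matrix.one_apply, h9fs23, h9fs34] at hj11
    have hm33 := hG (h9bv 3) (h9bv 3)
    simp [h9bv, Matrix.mulVec, dotProduct, Fin.sum_univ_six, Matrix.vecHead, Matrix.vecTail, h9cons_val_five, h9fs23, h9fs34, Matrix.diagonal] at hm33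
    have hm35 := hG (h9bv 3) (h9bv 5)
    simp [h9bv, Matrix.mulVec, dotProduct, Fin.sum_univ_six, Matrix.vecHead, Matrix.vecTail, h9cons_val_five, h9fs23, h9fs34, Matrix.diagonal] at hm35
    have hm55 := hG (h9bv 5) (h9bv 5)
    simp [h9bv, Matrix.mulVec, dotProduct, Fin.sum_univ_six, Matrix.vecHead, Matrix.vecTail, h9cons_val_five, h9fs23, h9fs34, Matrix.diagonal] at hm55
    have hm03 := hG (h9bv 0) (h9bv 3)
    simp [h9bv, Matrix.mulVec, dotProduct, Fin.sum_univ_six, Matrix.vecHead, Matrix.vecTail, h9cons_val_five, h9fs23, h9fs34, Matrix.diagonal] at hm03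
    have hm13 := hG (h9bv 1) (h9bv 3)
    simp [h9bv, Matrix.mulVec, dotProduct, Fin.sum_univ_six, Matrix.vecHead, Matrix.vecTail, h9cons_val_five, h9fs23, h9fs34, Matrix.diagonal] at hm13
    have hm23 := hG (h9bv 2) (h9bv 3)
    simp [h9bv, Matrix.mulVec, dotProduct, Fin.sum_univ_six, Matrix.vecHead, Matrix.vecTail, h9cons_val_five, h9fs23, h9fs34, Matrix.diagonal] at hm23
    have hm34 := hG (h9bv 3) (h9bv 4)
    simp [h9bv, Matrix.mulVec, dotProduct, Fin.sum_univ_six, Matrix.vecHead, Matrix.vecTail, h9cons_val_five, h9fs23, h9fs34, Matrix.diagonal] at hm34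
    have hm05 := hG (h9bv 0) (h9bv 5)
    simp [h9bv, Matrix.mulVec, dotProduct, Fin.sum_univ_six, Matrix.vecHead, Matrix.vecTail, h9cons_val_five, h9fs23, h9fs34, Matrix.diagonal] at hm05
    have hm15 := hG (h9bv 1) (h9bv 5)
    simp [h9bv, Matrix.mulVec, dotProduct, Fin.sum_univ_six, Matrix.vecHead, Matrix.vecTail, h9cons_val_five, h9fs23, h9fs34, Matrix.diagonal] at hm15
    have hm25 := hG (h9bv 2) (h9bv 5)
    simp [h9bv, Matrix.mulVec, dotProduct, Fin.sum_univ_six, Matrix.vecHead, Matrix.vecTail, h9cons_val_five, h9fs23, h9fs34, Matrix.diagonal] at hm25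
    have hm45 := hG (h9bv 4) (h9bv 5)
    simp [h9bv, Matrix.mulVec, dotProduct, Fin.sum_univ_six, Matrix.vecHead, Matrix.vecTail, h9cons_val_five, h9fs23, h9fs34, Matrix.diagonal] at hm45
    have hm02 := hG (h9bv 0) (h9bv 2)
    simp [h9bv, Matrix.mulVec, dotProduct, Fin.sum_univ_six, Matrix.vecHead, Matrix.vecTail, h9cons_val_five, h9fs23, h9fs34, Matrix.diagonal] at hm02
    have hm04 := hG (h9bv 0) (h9bv 4)
    simp [h9bv, Matrix.mulVec, dotProduct, Fin.sum_univ_six, Matrix.vecHead, Matrix.vecTail, h9cons_val_five, h9fs23, h9fs34, Matrix.diagonal] at hm04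
    have hm12 := hG (h9bv 1) (h9bv 2)
    simp [h9bv, Matrix.mulVec, dotProduct, Fin.sum_univ_six, Matrix.vecHead, Matrix.vecTail, h9cons_val_five, h9fs23, h9fs34, Matrix.diagonal] at hm12
    have hm14 := hG (h9bv 1) (h9bv 4)
    simp [h9bv, Matrix.mulVec, dotProduct, Fin.sum_univ_six, Matrix.vecHead, Matrix.vecTail, h9cons_val_five, h9fs23, h9fs34, Matrix.diagonal] at hm14
    have hm00 := hG (h9bv 0) (h9bv 0)
    simp [h9bv, Matrix.mulVec, dotProduct, Fin.sum_univ_six, Matrix.vecHead, Matrix.vecTail, h9cons_val_five, h9fs23, h9fs34, Matrix.diagonal] at hm00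
    have hm11 := hG (h9bv 1) (h9bv 1)
    simp [h9bv, Matrix.mulVec, dotProduct, Fin.sum_univ_six, Matrix.vecHead, Matrix.vecTail, h9cons_val_five, h9fs23, h9fs34, Matrix.diagonal] at hm11
    have hm22 := hG (h9bv 2) (h9bv 2)
    simp [h9bv, Matrix.mulVec, dotProduct, Fin.sum_univ_six, Matrix.vecHead, Matrix.vecTail, h9cons_val_five, h9fs23, h9fs34, Matrix.diagonal] at hm22
    have h05 : J 0 5 = 0 := hn450
    have h15 : J 1 5 = 0 := hn251
    have g25 : J 2 5 * J 2 5 = 0 := by linear_combination hn152 + (-(J 2 4)) * hn450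
    have h25 : J 2 5 = 0 := mul_self_eq_zero.mp g25
    have g45 : J 4 5 * J 4 5 = 0 := by
      linear_combination hn054 + (J 4 4 + -(J 0 0)) * hn251 + J 1 0 * hn450
    have h45 : J 4 5 = 0 := mul_self_eq_zero.mp g45
    have hj55c : (1 : ℝ) + J 3 5 * J 5 3 + J 5 5 * J 5 5 = 0 := by
      linear_combination ((1 : ℝ)) * hj55 + (-(J 5 0)) * h05 + (-(J 5 1)) * h15 + (-(J 5 2)) * h25 + (-(J 5 4)) * h45
    have h35ne : J 3 5 ≠ 0 := by
      intro h0
      have hc : J 5 5 * J 5 5 + 1 = 0 := by linear_combination hj55c + (-(J 5 3)) * h0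
      linarith [mul_self_nonneg (J 5 5)]
    have g03 : J 0 3 * J 3 5 = 0 := by
      linear_combination ((1 : ℝ)) * hj05 + (-(J 0 0)) * h05 + (-(J 0 1)) * h15 + (-(J 0 2)) * h25 + (-(J 0 4)) * h45 + (-(J 5 5)) * h05
    have g13 : J 1 3 * J 3 5 = 0 := by
      linear_combination ((1 : ℝ)) * hj15 + (-(J 1 0)) * h05 + (-(J 1 1)) * h15 + (-(J 1 2)) * h25 + (-(J 1 4)) * h45 + (-(J 5 5)) * h15
    have g23 : J 2 3 * J 3 5 = 0 := by
      linear_combination ((1 : ℝ)) * hj25 + (-(J 2 0)) * h05 + (-(J 2 1)) * h15 + (-(J 2 2)) * h25 + (-(J 2 4)) * h45 + (-(J 5 5)) * h25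
    have g43 : J 3 5 * J 4 3 = 0 := by
      linear_combination ((1 : ℝ)) * hj45 + (-(J 4 0)) * h05 + (-(J 4 1)) * h15 + (-(J 4 2)) * h25 + (-(J 4 4)) * h45 + (-(J 5 5)) * h45
    have h03 : J 0 3 = 0 := (mul_eq_zero.mp g03).resolve_right h35ne
    have h13 : J 1 3 = 0 := (mul_eq_zero.mp g13).resolve_right h35ne
    have h23 : J 2 3 = 0 := (mul_eq_zero.mp g23).resolve_right h35ne
    have h43 : J 4 3 = 0 := (mul_eq_zero.mp g43).resolve_left h35ne
    have e1 : (1 : ℝ) + J 3 3 * J 3 3 + J 3 5 * J 5 3 = 0 := by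
      linear_combination ((1 : ℝ)) * hj33 + (-(J 3 0)) * h03 + (-(J 3 1)) * h13 + (-(J 3 2)) * h23 + (-(J 3 4)) * h43
    have e5 : (-1 : ℝ) + J 3 3 * J 3 3 + J 5 3 * J 5 3 = 0 := by
      linear_combination ((1 : ℝ)) * hm33 + (-(J 0 3)) * h03 + (-(J 1 3)) * h13 + (-(J 2 3 * A ^ 2)) * h23 + (-(J 4 3 * B ^ 2)) * h43
    have e7 : (-1 : ℝ) + J 3 5 * J 3 5 + J 5 5 * J 5 5 = 0 := by
      linear_combination ((1 : ℝ)) * hm55 + (-(J 0 5)) * h05 + (-(J 1 5)) * h15 + (-(J 2 5 * A ^ 2)) * h25 + (-(J 4 5 * B ^ 2)) * h45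
    have hzy : (1 : ℝ) + J 3 3 * J 3 3 + J 3 5 * J 5 3 = 0 := by
      linear_combination ((1 : ℝ)) * e1
    have hw2 : -(J 3 3 * J 3 3) + J 5 5 * J 5 5 = 0 := by
      linear_combination ((1 : ℝ)) * hj55c + ((-1 : ℝ)) * e1
    have hz2 : (-1 : ℝ) + J 3 3 * J 3 3 + J 3 5 * J 3 5 = 0 := by
      linear_combination ((1 : ℝ)) * e7 + ((-1 : ℝ)) * hw2
    have hy2 : (-1 : ℝ) + J 3 3 * J 3 3 + J 5 3 * J 5 3 = 0 := by
      linear_combination ((1 : ℝ)) * e5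
    have key : 4 * J 3 3 * J 3 3 = 0 := by
      linear_combination ((1 : ℝ) + J 3 3 * J 3 3 + -(J 3 5 * J 5 3)) * hzy + (J 5 3 * J 5 3) * hz2 + ((1 : ℝ) + -(J 3 3 * J 3 3)) * hy2
    have hx2 : J 3 3 * J 3 3 = 0 := by
      linear_combination ((1/4 : ℝ)) * key
    have h33 : J 3 3 = 0 := mul_self_eq_zero.mp hx2
    have h55sq : J 5 5 * J 5 5 = 0 := by
      linear_combination ((1 : ℝ)) * hw2 + ((1 : ℝ)) * hx2
    have h55 : J 5 5 = 0 := mul_self_eq_zero.mp h55sq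
    have hy2p : (-1 : ℝ) + J 5 3 * J 5 3 = 0 := by
      linear_combination ((1 : ℝ)) * hy2 + ((-1 : ℝ)) * hx2
    have h35v : J 3 5 + J 5 3 = 0 := by
      linear_combination (-(J 3 5)) * hy2p + (J 5 3) * hzy + (-(J 5 3)) * hx2
    have g50 : J 5 0 * J 5 3 = 0 := by
      linear_combination ((1 : ℝ)) * hm03 + (-(J 0 0)) * h03 + (-(J 1 0)) * h13 + (-(J 2 0 * A ^ 2)) * h23 + (-(J 4 0 * B ^ 2)) * h43 + (-(J 3 0)) * h33
    have g51 : J 5 1 * J 5 3 = 0 := by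
      linear_combination ((1 : ℝ)) * hm13 + (-(J 0 1)) * h03 + (-(J 1 1)) * h13 + (-(J 2 1 * A ^ 2)) * h23 + (-(J 4 1 * B ^ 2)) * h43 + (-(J 3 1)) * h33
    have g52 : J 5 2 * J 5 3 = 0 := by
      linear_combination ((1 : ℝ)) * hm23 + (-(J 0 2)) * h03 + (-(J 1 2)) * h13 + (-(J 2 2 * A ^ 2)) * h23 + (-(J 4 2 * B ^ 2)) * h43 + (-(J 3 2)) * h33
    have g54 : J 5 3 * J 5 4 = 0 := by
      linear_combination ((1 : ℝ)) * hm34 + (-(J 0 4)) * h03 + (-(J 1 4)) * h13 + (-(J 2 4 * A ^ 2)) * h23 + (-(J 4 4 * B ^ 2)) * h43 + (-(J 3 4)) * h33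
    have h53ne : J 5 3 ≠ 0 := by intro h0; rw [h0] at hy2p; norm_num at hy2p
    have h50 : J 5 0 = 0 := (mul_eq_zero.mp g50).resolve_right h53ne
    have h51 : J 5 1 = 0 := (mul_eq_zero.mp g51).resolve_right h53ne
    have h52 : J 5 2 = 0 := (mul_eq_zero.mp g52).resolve_right h53ne
    have h54 : J 5 4 = 0 := (mul_eq_zero.mp g54).resolve_left h53ne
    have g30 : J 3 0 * J 3 5 = 0 := by
      linear_combination ((1 : ℝ)) * hm05 + (-(J 0 0)) * h05 + (-(J 1 0)) * h15 + (-(J 2 0 * A ^ 2)) * h25 + (-(J 4 0 * B ^ 2)) * h45 + (-(J 5 0)) * h55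
    have g31 : J 3 1 * J 3 5 = 0 := by
      linear_combination ((1 : ℝ)) * hm15 + (-(J 0 1)) * h05 + (-(J 1 1)) * h15 + (-(J 2 1 * A ^ 2)) * h25 + (-(J 4 1 * B ^ 2)) * h45 + (-(J 5 1)) * h55
    have g32 : J 3 2 * J 3 5 = 0 := by
      linear_combination ((1 : ℝ)) * hm25 + (-(J 0 2)) * h05 + (-(J 1 2)) * h15 + (-(J 2 2 * A ^ 2)) * h25 + (-(J 4 2 * B ^ 2)) * h45 + (-(J 5 2)) * h55
    have g34 : J 3 4 * J 3 5 = 0 := by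
      linear_combination ((1 : ℝ)) * hm45 + (-(J 0 4)) * h05 + (-(J 1 4)) * h15 + (-(J 2 4 * A ^ 2)) * h25 + (-(J 4 4 * B ^ 2)) * h45 + (-(J 5 4)) * h55
    have h30 : J 3 0 = 0 := (mul_eq_zero.mp g30).resolve_right h35ne
    have h31 : J 3 1 = 0 := (mul_eq_zero.mp g31).resolve_right h35ne
    have h32 : J 3 2 = 0 := (mul_eq_zero.mp g32).resolve_right h35ne
    have h34 : J 3 4 = 0 := (mul_eq_zero.mp g34).resolve_right h35ne
    have g04 : J 0 4 * J 0 4 = 0 := by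
      linear_combination ((1 : ℝ)) * hn140 + (-(J 0 1) + -(J 2 4)) * h05
    have g14 : J 1 4 * J 1 4 = 0 := by
      linear_combination ((-1 : ℝ)) * hn041 + (J 0 0 + J 4 4) * h15
    have h04 : J 0 4 = 0 := mul_self_eq_zero.mp g04
    have h14 : J 1 4 = 0 := mul_self_eq_zero.mp g14
    have hj44c : (1 : ℝ) + J 2 4 * J 4 2 + J 4 4 * J 4 4 = 0 := by
      linear_combination ((1 : ℝ)) * hj44 + (-(J 4 0)) * h04 + (-(J 4 1)) * h14 + (-(J 4 3)) * h34 + (-(J 4 5)) * h54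
    have h24ne : J 2 4 ≠ 0 := by
      intro h0
      have hc : J 4 4 * J 4 4 + 1 = 0 := by linear_combination hj44c + (-(J 4 2)) * h0
      linarith [mul_self_nonneg (J 4 4)]
    have g02 : J 0 2 * J 2 4 = 0 := by
      linear_combination ((1 : ℝ)) * hn122 + (-(J 1 1) + -(J 2 2)) * h25
    have g12 : J 1 2 * J 2 4 = 0 := by
      linear_combination ((-1 : ℝ)) * hn022 + (J 1 0 + J 4 2) * h25
    have h02 : J 0 2 = 0 := (mul_eq_zero.mp g02).resolve_right h24ne
    have h12 : J 1 2 = 0 := (mul_eq_zero.mp g12).resolve_right h24ne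
    have g44v : J 2 4 * (J 2 2 + J 4 4) = 0 := by
      linear_combination ((1 : ℝ)) * hj24 + (-(J 2 0)) * h04 + (-(J 2 1)) * h14 + (-(J 2 3)) * h34 + (-(J 2 5)) * h54
    have h44v : J 2 2 + J 4 4 = 0 := (mul_eq_zero.mp g44v).resolve_left h24ne
    have hj22c : (1 : ℝ) + J 2 2 * J 2 2 + J 2 4 * J 4 2 = 0 := by
      linear_combination ((1 : ℝ)) * hj22 + (-(J 2 0)) * h02 + (-(J 2 1)) * h12 + (-(J 2 3)) * h32 + (-(J 2 5)) * h52
    have hm02c : J 2 0 * J 2 2 * A ^ 2 + J 4 0 * J 4 2 * B ^ 2 = 0 := by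
      linear_combination ((1 : ℝ)) * hm02 + (-(J 0 0)) * h02 + (-(J 1 0)) * h12 + (-(J 3 2)) * h30 + (-(J 5 2)) * h50
    have hm04c : J 2 0 * J 2 4 * A ^ 2 + J 4 0 * J 4 4 * B ^ 2 = 0 := by
      linear_combination ((1 : ℝ)) * hm04 + (-(J 0 0)) * h04 + (-(J 1 0)) * h14 + (-(J 3 4)) * h30 + (-(J 5 4)) * h50
    have g20 : A ^ 2 * J 2 0 = 0 := by
      linear_combination (-(J 2 2)) * hm02c + (-(J 4 2)) * hm04c + (J 4 0 * J 4 2 * B ^ 2) * h44v + (J 2 0 * A ^ 2) * hj22c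
    have g40 : B ^ 2 * J 4 0 = 0 := by
      linear_combination (-(J 2 4)) * hm02c + (J 2 2) * hm04c + (-(J 2 2 * J 4 0 * B ^ 2)) * h44v + (J 4 0 * B ^ 2) * hj22c
    have h20 : J 2 0 = 0 := (mul_eq_zero.mp g20).resolve_left (pow_ne_zero 2 hA.ne')
    have h40 : J 4 0 = 0 := (mul_eq_zero.mp g40).resolve_left (pow_ne_zero 2 hB.ne')
    have hm12c : J 2 1 * J 2 2 * A ^ 2 + J 4 1 * J 4 2 * B ^ 2 = 0 := by
      linear_combination ((1 : ℝ)) * hm12 + (-(J 0 1)) * h02 + (-(J 1 1)) * h12 + (-(J 3 2)) * h31 + (-(J 5 2)) * h51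
    have hm14c : J 2 1 * J 2 4 * A ^ 2 + J 4 1 * J 4 4 * B ^ 2 = 0 := by
      linear_combination ((1 : ℝ)) * hm14 + (-(J 0 1)) * h04 + (-(J 1 1)) * h14 + (-(J 3 4)) * h31 + (-(J 5 4)) * h51
    have g21 : A ^ 2 * J 2 1 = 0 := by
      linear_combination (-(J 2 2)) * hm12c + (-(J 4 2)) * hm14c + (J 4 1 * J 4 2 * B ^ 2) * h44v + (J 2 1 * A ^ 2) * hj22c
    have g41 : B ^ 2 * J 4 1 = 0 := by
      linear_combination (-(J 2 4)) * hm12c + (J 2 2) * hm14c + (-(J 2 2 * J 4 1 * B ^ 2)) * h44v + (J 4 1 * B ^ 2) * hj22c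
    have h21 : J 2 1 = 0 := (mul_eq_zero.mp g21).resolve_left (pow_ne_zero 2 hA.ne')
    have h41 : J 4 1 = 0 := (mul_eq_zero.mp g41).resolve_left (pow_ne_zero 2 hB.ne')
    have g42v : J 3 5 * (J 1 0 + J 4 2) = 0 := by
      linear_combination ((1 : ℝ)) * hn023 + (J 3 4) * h12
    have g22v : J 3 5 * (J 1 1 + J 2 2) = 0 := by
      linear_combination ((1 : ℝ)) * hn123 + (-(J 3 4)) * h02
    have h42v : J 1 0 + J 4 2 = 0 := (mul_eq_zero.mp g42v).resolve_left h35ne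
    have h22v : J 1 1 + J 2 2 = 0 := (mul_eq_zero.mp g22v).resolve_left h35ne
    have f1 : (1 : ℝ) + J 0 0 * J 0 0 + J 0 1 * J 1 0 = 0 := by
      linear_combination ((1 : ℝ)) * hj00 + (-(J 2 0)) * h02 + (-(J 3 0)) * h03 + (-(J 4 0)) * h04 + (-(J 5 0)) * h05
    have f2 : (1 : ℝ) + J 0 1 * J 1 0 + J 1 1 * J 1 1 = 0 := by
      linear_combination ((1 : ℝ)) * hj11 + (-(J 2 1)) * h12 + (-(J 3 1)) * h13 + (-(J 4 1)) * h14 + (-(J 5 1)) * h15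
    have m1 : (-1 : ℝ) + J 0 0 * J 0 0 + J 1 0 * J 1 0 = 0 := by
      linear_combination ((1 : ℝ)) * hm00 + (-(J 2 0 * A ^ 2)) * h20 + (-(J 3 0)) * h30 + (-(J 4 0 * B ^ 2)) * h40 + (-(J 5 0)) * h50
    have m2 : (-1 : ℝ) + J 0 1 * J 0 1 + J 1 1 * J 1 1 = 0 := by
      linear_combination ((1 : ℝ)) * hm11 + (-(J 2 1 * A ^ 2)) * h21 + (-(J 3 1)) * h31 + (-(J 4 1 * B ^ 2)) * h41 + (-(J 5 1)) * h51
    have hxy : (1 : ℝ) + J 0 0 * J 0 0 + J 0 1 * J 1 0 = 0 := by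
      linear_combination ((1 : ℝ)) * f1
    have hsq : -(J 0 0 * J 0 0) + J 1 1 * J 1 1 = 0 := by
      linear_combination ((1 : ℝ)) * f2 + ((-1 : ℝ)) * f1
    have h01sq : (-1 : ℝ) + J 0 0 * J 0 0 + J 0 1 * J 0 1 = 0 := by
      linear_combination ((1 : ℝ)) * m2 + ((-1 : ℝ)) * hsq
    have h10sq : (-1 : ℝ) + J 0 0 * J 0 0 + J 1 0 * J 1 0 = 0 := by
      linear_combination ((1 : ℝ)) * m1
    have key2 : 4 * J 0 0 * J 0 0 = 0 := by
      linear_combination ((1 : ℝ) + J 0 0 * J 0 0 + -(J 0 1 * J 1 0)) * hxy + (J 1 0 * J 1 0) * h01sq + ((1 : ℝ) + -(J 0 0 * J 0 0)) * h10sq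
    have h00sq : J 0 0 * J 0 0 = 0 := by
      linear_combination ((1/4 : ℝ)) * key2
    have h00 : J 0 0 = 0 := mul_self_eq_zero.mp h00sq
    have h11sq : J 1 1 * J 1 1 = 0 := by
      linear_combination ((1 : ℝ)) * hsq + ((1 : ℝ)) * h00sq
    have h11 : J 1 1 = 0 := mul_self_eq_zero.mp h11sq
    have h22z : J 2 2 = 0 := by
      linear_combination ((1 : ℝ)) * h22v + ((-1 : ℝ)) * h11
    have h10sq1 : (-1 : ℝ) + J 1 0 * J 1 0 = 0 := by
      linear_combination ((1 : ℝ)) * h10sq + ((-1 : ℝ)) * h00sq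
    have hm22c : J 2 2 * J 2 2 * A ^ 2 + J 4 2 * J 4 2 * B ^ 2 + -(A ^ 2) = 0 := by
      linear_combination ((1 : ℝ)) * hm22 + (-(J 0 2)) * h02 + (-(J 1 2)) * h12 + (-(J 3 2)) * h32 + (-(J 5 2)) * h52
    have final : B ^ 2 = A ^ 2 := by
      linear_combination ((1 : ℝ)) * hm22c + (-(J 2 2 * A ^ 2)) * h22z + (J 1 0 * B ^ 2 + -(J 4 2 * B ^ 2)) * h42v + (-(B ^ 2)) * h10sq1
    have hf : (B - A) * (B + A) = 0 := by linear_combination final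
    rcases mul_eq_zero.mp hf with h | h
    · linarith
    · linarith
  · rintro rfl
    refine ⟨h9J0, ?_, ?_, ?_⟩
    · ext i j
      fin_cases i <;> fin_cases j <;>
        simp [h9J0, Matrix.mul_apply, Fin.sum_univ_six, Matrix.neg_apply, Matrix.one_apply,
          h9cons_val_five, Matrix.vecHead, Matrix.vecTail]
    · intro x y
      funext k
      fin_cases k <;>
        (simp [nijenhuisH9, h9bracket, h9J0, Matrix.mulVec, dotProduct, Fin.sum_univ_six,
          Matrix.vecHead, Matrix.vecTail, h9cons_val_five]
         try ring)
    · intro x y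
      simp [h9J0, Matrix.mulVec, dotProduct, Fin.sum_univ_six, Matrix.vecHead,
        Matrix.vecTail, h9cons_val_five, Matrix.diagonal]
      ring
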